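/- Let ℓ and m be positive integers, let Γ be an abelian group, and let A ⊆ Γ be a non-empty set. Let (G, γ) be a connected Γ-labelled graph with arb_{(Γ,A)}(G, γ) ≥ 2^{ℓm}. Then there is a sequence S_0 ⊇ S_1 ⊇ ⋯ ⊇ S_m of vertex sets of G with S_0 = V(G) such that (i) for every i ∈ [m] and every two distinct vertices x and y in S_m, there is an S_m-path of length at least ℓ in G[S_m ∪ (S_{i−1} \ S_i)] whose endpoints are x and y, and (ii) for every i ∈ [m], G[S_i] is connected and arb_{(Γ,A)}(G[S_i], γ) ≥ arb_{(Γ,A)}(G, γ)/2^{iℓ}. -/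

import Mathlib

namespace ArbPaper

universe u v

/-- The `γ`-value of a walk: the sum of the labels of its edges. -/
def walkVal {V : Type u} {Γ : Type v} [AddCommGroup Γ] {G : SimpleGraph V}
    (γ : Sym2 V → Γ) {x y : V} (w : G.Walk x y) : Γ :=
  (w.edges.map γ).sum

/-- The set `S` induces a subgraph having no cycle of `γ`-value in `A`. -/
def NoCycleValIn {V : Type u} {Γ : Type v} [AddCommGroup Γ] (G : SimpleGraph V)
    (γ : Sym2 V → Γ) (A : Set Γ) (S : Set V) : Prop :=
  ∀ (v : V) (w : G.Walk v v), w.IsCycle → (∀ x ∈ w.support, x ∈ S) →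
    walkVal γ w ∉ A

/-- The `(Γ, A)`-vertex-arboricity of the subgraph of `G` induced on `S`:
the minimum number of parts in a partition of `S` such that each part induces
a subgraph having no cycle of `γ`-value in `A`. -/
noncomputable def arbOn {V : Type u} {Γ : Type v} [AddCommGroup Γ] (G : SimpleGraph V)
    (γ : Sym2 V → Γ) (A : Set Γ) (S : Set V) : ℕ :=
  sInf {k : ℕ | ∃ f : V → Fin k,
    ∀ i : Fin k, NoCycleValIn G γ A {v | v ∈ S ∧ f v = i}}

/-- The `(Γ, A)`-vertex-arboricity of `(G, γ)`. -/
noncomputable def arb {V : Type u} {Γ : Type v} [AddCommGroup Γ] (G : SimpleGraph V)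
    (γ : Sym2 V → Γ) (A : Set Γ) : ℕ :=
  arbOn G γ A Set.univ

/-- `G` contains an `(A, d)`-cycle: a cycle of `γ`-value in `A` and length at least `d`. -/
def ContainsADCycle {V : Type u} {Γ : Type v} [AddCommGroup Γ] (G : SimpleGraph V)
    (γ : Sym2 V → Γ) (A : Set Γ) (d : ℕ) : Prop :=
  ∃ (v : V) (w : G.Walk v v), w.IsCycle ∧ walkVal γ w ∈ A ∧ d ≤ w.length

/-- `b` (the branching vertices) together with the branching paths `P i j` (for `i < j`)
form a subdivision of the complete graph `K t` inside `G`. -/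
def IsKtSubdivision {V : Type u} (G : SimpleGraph V) (t : ℕ) (b : Fin t → V)
    (P : ∀ i j : Fin t, G.Walk (b i) (b j)) : Prop :=
  Function.Injective b ∧
  (∀ i j : Fin t, i < j → (P i j).IsPath) ∧
  (∀ i j : Fin t, i < j → ∀ v ∈ (P i j).support, v ∈ Set.range b → v = b i ∨ v = b j) ∧
  (∀ i j k l : Fin t, i < j → k < l → (i, j) ≠ (k, l) → ∀ v,
    v ∈ (P i j).support → v ∈ (P k l).support →
      (v = b i ∨ v = b j) ∧ (v = b k ∨ v = b l))

/-- `G` itself is (as a whole) a subdivision of `K t` with data `b`, `P`: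
every vertex and every edge of `G` lies on some branching path. -/
def IsSpanningKtSubdivision {V : Type u} (G : SimpleGraph V) (t : ℕ) (b : Fin t → V)
    (P : ∀ i j : Fin t, G.Walk (b i) (b j)) : Prop :=
  IsKtSubdivision G t b P ∧
  (∀ v : V, ∃ i j : Fin t, i < j ∧ v ∈ (P i j).support) ∧
  (∀ e ∈ G.edgeSet, ∃ i j : Fin t, i < j ∧ e ∈ (P i j).edges)

/-- `G` contains an `(A, d)`-subdivision of `K t`: a subdivision of `K t` in which every
branching path has `γ`-value in `A` and length at least `d`. -/
def ContainsADSubdivision {V : Type u} {Γ : Type v} [AddCommGroup Γ] (G : SimpleGraph V)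
    (γ : Sym2 V → Γ) (A : Set Γ) (t d : ℕ) : Prop :=
  ∃ (b : Fin t → V) (P : ∀ i j : Fin t, G.Walk (b i) (b j)),
    IsKtSubdivision G t b P ∧
    ∀ i j : Fin t, i < j → walkVal γ (P i j) ∈ A ∧ d ≤ (P i j).length

/-- `w` is an `X`-path lying inside the induced subgraph `G[Y]`: a path of length at
least `2` whose endpoints lie in `X`, internal vertices lie outside `X`, and all of
whose vertices lie in `Y`. -/
def IsXPathIn {V : Type u} (G : SimpleGraph V) (X Y : Set V) {x y : V}
    (w : G.Walk x y) : Prop :=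
  w.IsPath ∧ 2 ≤ w.length ∧ x ∈ X ∧ y ∈ X ∧
  (∀ v ∈ w.support, v ∈ Y) ∧
  (∀ v ∈ w.support, v ≠ x → v ≠ y → v ∉ X)

/-- `(L 0, L 1, …, L p)` is a leveling of the connected graph `G`. -/
def IsLeveling {V : Type u} (G : SimpleGraph V) (p : ℕ) (L : ℕ → Set V) : Prop :=
  (∀ i j, i ≤ p → j ≤ p → i ≠ j → Disjoint (L i) (L j)) ∧
  (∃ v : V, L 0 = {v}) ∧
  (∀ v : V, ∃ i, i ≤ p ∧ v ∈ L i) ∧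
  (∀ i, 1 ≤ i → i ≤ p → ∀ v ∈ L i,
    (∃ u ∈ L (i - 1), G.Adj v u) ∧ (∀ j, j + 2 ≤ i → ∀ u ∈ L j, ¬ G.Adj v u))

/-- `G[Y]` is a connected component of `G[S]`. -/
def IsCompOf {V : Type u} (G : SimpleGraph V) (Y S : Set V) : Prop :=
  Y ⊆ S ∧ (G.induce Y).Connected ∧ ∀ u ∈ Y, ∀ v ∈ S, G.Adj u v → v ∈ Y


section Dev
variable {V : Type u} {Γ : Type v} [AddCommGroup Γ] {G : SimpleGraph V}
  {γ : Sym2 V → Γ} {A : Set Γ}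

def Good (G : SimpleGraph V) (γ : Sym2 V → Γ) (A : Set Γ) (S : Set V) (k : ℕ) : Prop :=
  ∃ f : V → Fin k, ∀ i : Fin k, NoCycleValIn G γ A {v | v ∈ S ∧ f v = i}

lemma arbOn_eq_sInf (S : Set V) : arbOn G γ A S = sInf {k | Good G γ A S k} := rfl

lemma noCycleValIn_mono {S S' : Set V} (h : S' ⊆ S) (hS : NoCycleValIn G γ A S) :
    NoCycleValIn G γ A S' := fun v w hc hsup => hS v w hc (fun x hx => h (hsup x hx))

lemma exists_ne_mem_support_of_isCycle {v : V} {w : G.Walk v v} (hc : w.IsCycle) :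
    ∃ u ∈ w.support, u ≠ v := by
  cases w with
  | nil => exact absurd rfl hc.ne_nil
  | cons h p =>
    refine ⟨_, ?_, h.ne'⟩
    rw [SimpleGraph.Walk.support_cons]
    exact List.mem_cons_of_mem _ p.start_mem_support

lemma noCycleValIn_of_subsingleton {S : Set V} (h : ∀ a ∈ S, ∀ b ∈ S, a = b) :
    NoCycleValIn G γ A S := by
  intro v w hc hsup
  obtain ⟨u, hu, hne⟩ := exists_ne_mem_support_of_isCycle hc
  exact absurd (h u (hsup u hu) v (hsup v w.start_mem_support)) hne

lemma good_mono {S : Set V} {k k' : ℕ} (h : Good G γ A S k) (hk : k ≤ k') :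
    Good G γ A S k' := by
  obtain ⟨f, hf⟩ := h
  refine ⟨fun v => Fin.castLE hk (f v), fun i => ?_⟩
  by_cases hi : ∃ i' : Fin k, Fin.castLE hk i' = i
  · obtain ⟨i', rfl⟩ := hi
    refine noCycleValIn_mono ?_ (hf i')
    rintro v ⟨hv1, hv2⟩
    refine ⟨hv1, ?_⟩
    have := congrArg Fin.val hv2
    simp only [Fin.coe_castLE] at this
    exact Fin.ext this
  · intro v w hc hsup
    exact absurd (hsup v w.start_mem_support) (fun hv => hi ⟨f v, hv.2⟩)

lemma good_card [Fintype V] (S : Set V) : Good G γ A S (Fintype.card V) := by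
  refine ⟨Fintype.equivFin V, fun i => noCycleValIn_of_subsingleton ?_⟩
  intro a ha b hb
  exact (Fintype.equivFin V).injective (ha.2.trans hb.2.symm)

lemma good_arbOn [Fintype V] (S : Set V) : Good G γ A S (arbOn G γ A S) := by
  have h : {k | Good G γ A S k}.Nonempty := ⟨Fintype.card V, good_card S⟩
  have := Nat.sInf_mem h
  rwa [← arbOn_eq_sInf] at this

lemma arbOn_le_of_good {S : Set V} {k : ℕ} (h : Good G γ A S k) : arbOn G γ A S ≤ k :=
  Nat.sInf_le h

lemma good_of_arbOn_le [Fintype V] {S : Set V} {k : ℕ} (h : arbOn G γ A S ≤ k) :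
    Good G γ A S k := good_mono (good_arbOn S) h

lemma one_le_arbOn [Fintype V] [Nonempty V] (S : Set V) : 1 ≤ arbOn G γ A S := by
  rcases Nat.eq_zero_or_pos (arbOn G γ A S) with h | h
  · obtain ⟨f, -⟩ := good_of_arbOn_le (le_of_eq h)
    exact (f (Classical.arbitrary V)).elim0
  · exact h

lemma arbOn_le_add [Fintype V] {T E O : Set V} (hT : T ⊆ E ∪ O) :
    arbOn G γ A T ≤ arbOn G γ A E + arbOn G γ A O := by
  classical
  obtain ⟨f, hf⟩ := good_arbOn (G := G) (γ := γ) (A := A) E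
  obtain ⟨g, hg⟩ := good_arbOn (G := G) (γ := γ) (A := A) O
  refine arbOn_le_of_good
    ⟨fun v => finSumFinEquiv (if v ∈ E then Sum.inl (f v) else Sum.inr (g v)), fun i => ?_⟩
  obtain ⟨s, rfl⟩ := finSumFinEquiv.surjective i
  cases s with
  | inl i' =>
    refine noCycleValIn_mono (S := {v | v ∈ E ∧ f v = i'}) ?_ (hf i')
    rintro v ⟨hvT, hv⟩
    dsimp only at hv
    by_cases hvE : v ∈ E
    · rw [if_pos hvE] at hv
      exact ⟨hvE, Sum.inl.inj (finSumFinEquiv.injective hv)⟩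
    · rw [if_neg hvE] at hv
      exact absurd (finSumFinEquiv.injective hv) (by simp)
  | inr i' =>
    refine noCycleValIn_mono (S := {v | v ∈ O ∧ g v = i'}) ?_ (hg i')
    rintro v ⟨hvT, hv⟩
    dsimp only at hv
    by_cases hvE : v ∈ E
    · rw [if_pos hvE] at hv
      exact absurd (finSumFinEquiv.injective hv) (by simp)
    · rw [if_neg hvE] at hv
      rcases hT hvT with h | h
      · exact absurd h hvE
      · exact ⟨h, Sum.inr.inj (finSumFinEquiv.injective hv)⟩

/-- Reachability within a vertex set. -/
def ReachIn (G : SimpleGraph V) (U : Set V) (x y : V) : Prop :=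
  ∃ w : G.Walk x y, ∀ v ∈ w.support, v ∈ U

/-- Connectivity of the induced subgraph on `T`, phrased with ambient walks. -/
def ConnIn (G : SimpleGraph V) (T : Set V) : Prop :=
  T.Nonempty ∧ ∀ x ∈ T, ∀ y ∈ T, ReachIn G T x y

namespace ReachIn

lemma refl {U : Set V} {x : V} (hx : x ∈ U) : ReachIn G U x x :=
  ⟨SimpleGraph.Walk.nil, by simp [hx]⟩

lemma symm {U : Set V} {x y : V} (h : ReachIn G U x y) : ReachIn G U y x := by
  obtain ⟨w, hw⟩ := h
  exact ⟨w.reverse, fun v hv => hw v (by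
    rwa [SimpleGraph.Walk.support_reverse, List.mem_reverse] at hv)⟩

lemma trans {U : Set V} {x y z : V} (h : ReachIn G U x y) (h' : ReachIn G U y z) :
    ReachIn G U x z := by
  obtain ⟨w, hw⟩ := h; obtain ⟨w', hw'⟩ := h'
  refine ⟨w.append w', fun v hv => ?_⟩
  rw [SimpleGraph.Walk.mem_support_append_iff] at hv
  exact hv.elim (hw v) (hw' v)

lemma mem_right {U : Set V} {x y : V} (h : ReachIn G U x y) : y ∈ U :=
  h.choose_spec y h.choose.end_mem_support

lemma mem_left {U : Set V} {x y : V} (h : ReachIn G U x y) : x ∈ U :=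
  h.choose_spec x h.choose.start_mem_support

lemma of_mem_support {U : Set V} {x y v : V} (w : G.Walk x y)
    (hw : ∀ u ∈ w.support, u ∈ U) (hv : v ∈ w.support) : ReachIn G U x v := by
  classical
  exact ⟨w.takeUntil v hv, fun u hu => hw u (w.support_takeUntil_subset hv hu)⟩

lemma mono {U U' : Set V} {x y : V} (h : ReachIn G U x y) (hU : U ⊆ U') :
    ReachIn G U' x y := by
  obtain ⟨w, hw⟩ := h
  exact ⟨w, fun v hv => hU (hw v hv)⟩

end ReachIn

lemma ConnIn.induce_connected {T : Set V} (h : ConnIn G T) : (G.induce T).Connected := by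
  obtain ⟨⟨r, hr⟩, hconn⟩ := h
  have key : ∀ {x y : V} (w : G.Walk x y) (hw : ∀ v ∈ w.support, v ∈ T),
      (G.induce T).Reachable ⟨x, hw x w.start_mem_support⟩ ⟨y, hw y w.end_mem_support⟩ := by
    intro x y w
    induction w with
    | nil => intro hw; rfl
    | @cons a b c hadj p ih =>
      intro hw
      have hb : ∀ v ∈ p.support, v ∈ T := fun v hv => hw v (by simp [SimpleGraph.Walk.support_cons, hv])
      have h1 : (G.induce T).Adj ⟨a, hw a (SimpleGraph.Walk.start_mem_support _)⟩
          ⟨b, hb b p.start_mem_support⟩ := by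
        simp only [SimpleGraph.comap_adj, Function.Embedding.coe_subtype]
        exact hadj
      exact h1.reachable.trans (ih hb)
  rw [SimpleGraph.connected_iff]
  refine ⟨?_, ⟨⟨r, hr⟩⟩⟩
  rintro ⟨x, hx⟩ ⟨y, hy⟩
  obtain ⟨w, hw⟩ := hconn x hx y hy
  exact key w hw

/-- Distance from `r` within the vertex set `T`. -/
noncomputable def dIn (G : SimpleGraph V) (T : Set V) (r v : V) : ℕ :=
  sInf {k | ∃ w : G.Walk r v, w.length = k ∧ ∀ u ∈ w.support, u ∈ T}

lemma dIn_le {T : Set V} {r v : V} (w : G.Walk r v) (hw : ∀ u ∈ w.support, u ∈ T) :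
    dIn G T r v ≤ w.length := Nat.sInf_le ⟨w, rfl, hw⟩

lemma exists_walk_dIn {T : Set V} {r v : V} (h : ReachIn G T r v) :
    ∃ w : G.Walk r v, w.length = dIn G T r v ∧ ∀ u ∈ w.support, u ∈ T := by
  obtain ⟨w, hw⟩ := h
  exact Nat.sInf_mem (⟨w.length, w, rfl, hw⟩ :
    {k | ∃ w : G.Walk r v, w.length = k ∧ ∀ u ∈ w.support, u ∈ T}.Nonempty)

lemma dIn_self {T : Set V} {r : V} (hr : r ∈ T) : dIn G T r r = 0 :=
  Nat.le_zero.mp (dIn_le SimpleGraph.Walk.nil (by simp [hr]))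

lemma eq_of_dIn_zero {T : Set V} {r v : V} (h : ReachIn G T r v)
    (h0 : dIn G T r v = 0) : v = r := by
  obtain ⟨w, hlen, -⟩ := exists_walk_dIn h
  exact (SimpleGraph.Walk.eq_of_length_eq_zero (by rw [hlen, h0])).symm

lemma dIn_le_of_adj {T : Set V} {r u v : V} (h : ReachIn G T r u) (hv : v ∈ T)
    (hadj : G.Adj u v) : dIn G T r v ≤ dIn G T r u + 1 := by
  obtain ⟨w, hlen, hw⟩ := exists_walk_dIn h
  have := dIn_le (w.concat hadj) (fun z hz => by
    rw [SimpleGraph.Walk.support_concat, List.mem_append] at hz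
    rcases hz with hz | hz
    · exact hw z hz
    · simp at hz; subst hz; exact hv)
  rwa [SimpleGraph.Walk.length_concat, hlen] at this

lemma exists_parent {T : Set V} {r v : V} {k : ℕ} (h : ReachIn G T r v)
    (hk : dIn G T r v = k + 1) :
    ∃ u, u ∈ T ∧ G.Adj v u ∧ dIn G T r u = k ∧ ReachIn G T r u := by
  obtain ⟨w, hlen, hw⟩ := exists_walk_dIn h
  have hwr : ∀ z ∈ w.reverse.support, z ∈ T := fun z hz => hw z (by
    rwa [SimpleGraph.Walk.support_reverse, List.mem_reverse] at hz)
  have hlenr : w.reverse.length = k + 1 := by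
    rw [SimpleGraph.Walk.length_reverse, hlen, hk]
  obtain ⟨u, hadj, q, hq, hqsup⟩ :
      ∃ (u : V) (_ : G.Adj v u) (q : G.Walk u r), q.length = k ∧
        ∀ z ∈ q.support, z ∈ w.reverse.support := by
    cases hwr' : w.reverse with
    | nil =>
      exfalso; rw [hwr'] at hlenr; simp at hlenr
    | cons hadj q =>
      refine ⟨_, hadj, q, ?_, ?_⟩
      · have := hlenr; rw [hwr'] at this
        simpa [SimpleGraph.Walk.length_cons] using this
      · intro z hz
        rw [SimpleGraph.Walk.support_cons]
        exact List.mem_cons_of_mem _ hz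
  have hqT : ∀ z ∈ q.support, z ∈ T := fun z hz => hwr z (hqsup z hz)
  have hru : ReachIn G T r u := ⟨q.reverse, fun z hz => hqT z (by
    rwa [SimpleGraph.Walk.support_reverse, List.mem_reverse] at hz)⟩
  have hle : dIn G T r u ≤ k := by
    have := dIn_le q.reverse (fun z hz => hqT z (by
      rwa [SimpleGraph.Walk.support_reverse, List.mem_reverse] at hz))
    rwa [SimpleGraph.Walk.length_reverse, hq] at this
  have hge : k ≤ dIn G T r u := by
    have hvT : v ∈ T := hw v w.end_mem_support
    have := dIn_le_of_adj hru hvT hadj.symm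
    omega
  exact ⟨u, hqT u q.start_mem_support, hadj, le_antisymm hle hge, hru⟩

lemma exists_walk_dIn_le {T : Set V} {r v : V} (h : ReachIn G T r v) :
    ∃ w : G.Walk r v, ∀ z ∈ w.support, z ∈ T ∧ dIn G T r z ≤ dIn G T r v := by
  classical
  obtain ⟨w, hlen, hw⟩ := exists_walk_dIn h
  refine ⟨w, fun z hz => ⟨hw z hz, ?_⟩⟩
  have h1 := dIn_le (w.takeUntil z hz) (fun u hu => hw u (w.support_takeUntil_subset hz hu))
  have h2 := w.length_takeUntil_le hz
  omega

lemma lemmaD [Fintype V] {U : Set V} {cls : V → Set V} {K : ℕ} (hK : 1 ≤ K)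
    (hcls : ∀ v ∈ U, arbOn G γ A (cls v) ≤ K)
    (hcyc : ∀ (v : V) (w : G.Walk v v), w.IsCycle → (∀ u ∈ w.support, u ∈ U) →
      ∀ u ∈ w.support, u ∈ cls v ∧ cls u = cls v) :
    arbOn G γ A U ≤ K := by
  classical
  set F : Set V → V → Fin K := fun C =>
    if h : ∃ f : V → Fin K, ∀ i, NoCycleValIn G γ A {v | v ∈ C ∧ f v = i} then h.choose
    else fun _ => ⟨0, hK⟩ with hF
  refine arbOn_le_of_good ⟨fun v => F (cls v) v, fun i => ?_⟩
  intro v w hc hsup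
  have hU : ∀ u ∈ w.support, u ∈ U := fun u hu => (hsup u hu).1
  have h1 := hcyc v w hc hU
  have hvU : v ∈ U := hU v w.start_mem_support
  have hgood : ∃ f : V → Fin K, ∀ i, NoCycleValIn G γ A {x | x ∈ cls v ∧ f x = i} :=
    good_of_arbOn_le (hcls v hvU)
  have hFspec : ∀ i, NoCycleValIn G γ A {x | x ∈ cls v ∧ F (cls v) x = i} := by
    rw [hF]; dsimp only; rw [dif_pos hgood]; exact hgood.choose_spec
  refine hFspec i v w hc (fun u hu => ⟨(h1 u hu).1, ?_⟩)
  have := (hsup u hu).2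
  dsimp only at this ⊢
  rw [← (h1 u hu).2]
  exact this

/-- The set of vertices of `T` at `dIn`-distance `j` from `r`. -/
def LevSet (G : SimpleGraph V) (T : Set V) (r : V) (j : ℕ) : Set V :=
  {v | v ∈ T ∧ dIn G T r v = j}

/-- The connected component of `x` within its level. -/
def ClassOf (G : SimpleGraph V) (T : Set V) (r : V) (x : V) : Set V :=
  {y | ReachIn G (LevSet G T r (dIn G T r x)) x y}

lemma mem_classOf_self {T : Set V} {r x : V} (hx : x ∈ T) : x ∈ ClassOf G T r x :=
  ReachIn.refl ⟨hx, rfl⟩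

lemma classOf_subset_lev {T : Set V} {r x : V} :
    ClassOf G T r x ⊆ LevSet G T r (dIn G T r x) := fun _ hy => ReachIn.mem_right hy

lemma classOf_subset {T : Set V} {r x : V} : ClassOf G T r x ⊆ T :=
  fun y hy => (classOf_subset_lev hy).1

lemma classOf_eq {T : Set V} {r x y : V} (hy : y ∈ ClassOf G T r x) :
    ClassOf G T r y = ClassOf G T r x := by
  have hylev := classOf_subset_lev hy
  have hdy : dIn G T r y = dIn G T r x := hylev.2
  ext z
  constructor
  · intro hz
    have hz' : ReachIn G (LevSet G T r (dIn G T r y)) y z := hz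
    rw [hdy] at hz'
    exact ReachIn.trans (U := LevSet G T r (dIn G T r x)) hy hz'
  · intro hz
    have : ReachIn G (LevSet G T r (dIn G T r x)) y z := ReachIn.trans (ReachIn.symm hy) hz
    show ReachIn G (LevSet G T r (dIn G T r y)) y z
    rwa [hdy]

lemma connIn_classOf {T : Set V} {r x : V} (hx : x ∈ T) : ConnIn G (ClassOf G T r x) := by
  refine ⟨⟨x, mem_classOf_self hx⟩, fun a ha b hb => ?_⟩
  obtain ⟨wa, hwa⟩ := ha
  obtain ⟨wb, hwb⟩ := hb
  refine ⟨wa.reverse.append wb, fun v hv => ?_⟩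
  rw [SimpleGraph.Walk.mem_support_append_iff] at hv
  rcases hv with hv | hv
  · rw [SimpleGraph.Walk.support_reverse, List.mem_reverse] at hv
    exact ReachIn.of_mem_support wa hwa hv
  · exact ReachIn.of_mem_support wb hwb hv

lemma dIn_eq_of_adj_parity {T : Set V} (hT : ConnIn G T) {r : V} (hr : r ∈ T) {u v : V}
    (hu : u ∈ T) (hv : v ∈ T) (hadj : G.Adj u v)
    (hpar : dIn G T r u % 2 = dIn G T r v % 2) : dIn G T r u = dIn G T r v := by
  have h1 := dIn_le_of_adj (hT.2 r hr u hu) hv hadj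
  have h2 := dIn_le_of_adj (hT.2 r hr v hv) hu hadj.symm
  omega

lemma dIn_const_on_walk {T : Set V} (hT : ConnIn G T) {r : V} (hr : r ∈ T) {c : ℕ}
    {x y : V} (w : G.Walk x y)
    (hw : ∀ v ∈ w.support, v ∈ T ∧ dIn G T r v % 2 = c) :
    ∀ u ∈ w.support, dIn G T r u = dIn G T r x := by
  induction w with
  | nil =>
    intro u hu
    rw [SimpleGraph.Walk.support_nil, List.mem_singleton] at hu
    rw [hu]
  | @cons a b cc hadj p ih =>
    intro u hu
    have hmem : ∀ v ∈ p.support, v ∈ T ∧ dIn G T r v % 2 = c := fun v hv =>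
      hw v (by rw [SimpleGraph.Walk.support_cons]; exact List.mem_cons_of_mem _ hv)
    have ha := hw a (SimpleGraph.Walk.start_mem_support _)
    have hb := hmem b p.start_mem_support
    have hab : dIn G T r b = dIn G T r a :=
      dIn_eq_of_adj_parity hT hr hb.1 ha.1 hadj.symm (by rw [ha.2, hb.2])
    rw [SimpleGraph.Walk.support_cons, List.mem_cons] at hu
    rcases hu with hu | hu
    · rw [hu]
    · rw [ih hmem u hu, hab]

lemma edge_mem_of_length_one {x y : V} (p : G.Walk x y) (h : p.length = 1) :
    s(x, y) ∈ p.edges := by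
  cases p with
  | nil => simp at h
  | cons hadj q =>
    have h0 : q.length = 0 := by
      rw [SimpleGraph.Walk.length_cons] at h; omega
    have hb := SimpleGraph.Walk.eq_of_length_eq_zero h0
    subst hb
    rw [SimpleGraph.Walk.edges_cons]
    exact List.mem_cons_self

/-- Any two distinct vertices of `S` are joined by a path of length `≥ max 2 c`
with all vertices in `T₀` and all internal vertices outside `S`. -/
def PathProp (G : SimpleGraph V) (T₀ S : Set V) (c : ℕ) : Prop :=
  ∀ x ∈ S, ∀ y ∈ S, x ≠ y → ∃ w : G.Walk x y, w.IsPath ∧ 2 ≤ w.length ∧ c ≤ w.length ∧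
    (∀ v ∈ w.support, v ∈ T₀) ∧ (∀ v ∈ w.support, v ≠ x → v ≠ y → v ∉ S)

lemma base_path {T : Set V} (hT : ConnIn G T) {r : V} (hr : r ∈ T) {j : ℕ} (hj : 1 ≤ j)
    {S : Set V} (hSlev : S ⊆ LevSet G T r j) : PathProp G T S 2 := by
  classical
  intro x hx y hy hxy
  have hxlev := hSlev hx
  have hylev := hSlev hy
  obtain ⟨px, hpxT, hadjx, hdpx, hrpx⟩ :=
    exists_parent (hT.2 r hr x hxlev.1) (k := j - 1)
      (by rw [hxlev.2]; omega)
  obtain ⟨py, hpyT, hadjy, hdpy, hrpy⟩ :=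
    exists_parent (hT.2 r hr y hylev.1) (k := j - 1)
      (by rw [hylev.2]; omega)
  obtain ⟨w1, hw1⟩ := exists_walk_dIn_le hrpx
  obtain ⟨w2, hw2⟩ := exists_walk_dIn_le hrpy
  set W : G.Walk x y := SimpleGraph.Walk.cons hadjx (w1.reverse.append (w2.concat hadjy.symm))
    with hW
  have hWsup : ∀ v ∈ W.support, v = x ∨ v = y ∨ (v ∈ T ∧ dIn G T r v ≤ j - 1) := by
    intro v hv
    rw [hW, SimpleGraph.Walk.support_cons, List.mem_cons] at hv
    rcases hv with hv | hv
    · exact Or.inl hv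
    · rw [SimpleGraph.Walk.mem_support_append_iff] at hv
      rcases hv with hv | hv
      · rw [SimpleGraph.Walk.support_reverse, List.mem_reverse] at hv
        have := hw1 v hv
        right; right; rw [hdpx] at this; exact this
      · rw [SimpleGraph.Walk.support_concat, List.mem_append] at hv
        rcases hv with hv | hv
        · have := hw2 v hv
          right; right; rw [hdpy] at this; exact this
        · rw [List.mem_singleton] at hv
          exact Or.inr (Or.inl hv)
  have hWedges : ∀ e ∈ W.edges, e = s(x, px) ∨ e ∈ w1.edges ∨ e ∈ w2.edges ∨ e = s(py, y) := by
    intro e he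
    rw [hW, SimpleGraph.Walk.edges_cons, List.mem_cons] at he
    rcases he with he | he
    · exact Or.inl he
    · rw [SimpleGraph.Walk.edges_append, List.mem_append] at he
      rcases he with he | he
      · rw [SimpleGraph.Walk.edges_reverse, List.mem_reverse] at he
        exact Or.inr (Or.inl he)
      · rw [SimpleGraph.Walk.edges_concat, List.concat_eq_append, List.mem_append] at he
        rcases he with he | he
        · exact Or.inr (Or.inr (Or.inl he))
        · rw [List.mem_singleton] at he
          exact Or.inr (Or.inr (Or.inr he))
  have hlen2 : 2 ≤ W.bypass.length := by
    by_contra hlen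
    push_neg at hlen
    interval_cases h : W.bypass.length
    · exact hxy (SimpleGraph.Walk.eq_of_length_eq_zero h)
    · have hmem := W.edges_bypass_subset (edge_mem_of_length_one W.bypass h)
      have hdx : dIn G T r x = j := hxlev.2
      have hdy : dIn G T r y = j := hylev.2
      rcases hWedges _ hmem with h' | h' | h' | h'
      · rw [Sym2.eq_iff] at h'
        rcases h' with ⟨-, h2⟩ | ⟨h1, h2⟩
        · rw [← h2] at hdpx; omega
        · exact hxy h2.symm
      · have := (hw1 x (SimpleGraph.Walk.fst_mem_support_of_mem_edges w1 h')).2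
        rw [hdpx] at this; omega
      · have := (hw2 x (SimpleGraph.Walk.fst_mem_support_of_mem_edges w2 h')).2
        rw [hdpy] at this; omega
      · rw [Sym2.eq_iff] at h'
        rcases h' with ⟨h1, -⟩ | ⟨h1, h2⟩
        · rw [← h1] at hdpy; omega
        · exact hxy h1
  refine ⟨W.bypass, SimpleGraph.Walk.bypass_isPath W, hlen2, hlen2, ?_, ?_⟩
  · -- all vertices in T
    intro v hv
    have hv' := W.support_bypass_subset hv
    rcases hWsup v hv' with h | h | h
    · rw [h]; exact hxlev.1
    · rw [h]; exact hylev.1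
    · exact h.1
  · -- internal vertices outside S
    intro v hv hvx hvy
    have hv' := W.support_bypass_subset hv
    rcases hWsup v hv' with h | h | h
    · exact absurd h hvx
    · exact absurd h hvy
    · intro hvS
      have := (hSlev hvS).2
      omega

lemma core [Fintype V] {T : Set V} (hT : ConnIn G T) :
    ∃ S : Set V, S ⊆ T ∧ ConnIn G S ∧ arbOn G γ A T ≤ 2 * arbOn G γ A S ∧
      ((∃ v, S = {v}) ∨
        (PathProp G T S 2 ∧ ∀ x ∈ S, ∃ u, u ∈ T ∧ G.Adj x u ∧ u ∉ S)) := by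
  classical
  obtain ⟨r, hr⟩ := hT.1
  have : Nonempty V := ⟨r⟩
  obtain ⟨x₀, hx₀T, hx₀max⟩ :=
    Set.exists_max_image T (fun x => arbOn G γ A (ClassOf G T r x)) T.toFinite hT.1
  set S := ClassOf G T r x₀ with hS
  set j := dIn G T r x₀ with hj
  set K := arbOn G γ A S with hK
  have hK1 : 1 ≤ K := one_le_arbOn _
  have hpar : ∀ c : ℕ, arbOn G γ A {v | v ∈ T ∧ dIn G T r v % 2 = c} ≤ K := by
    intro c
    refine lemmaD hK1 (cls := fun v => ClassOf G T r v) ?_ ?_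
    · intro v hv
      exact hx₀max v hv.1
    · intro v w hc hsup u hu
      have hconst := dIn_const_on_walk hT hr (c := c) w (fun z hz => (hsup z hz))
      have hmem : u ∈ ClassOf G T r v := by
        refine ReachIn.of_mem_support (U := LevSet G T r (dIn G T r v)) w ?_ hu
        intro z hz
        exact ⟨(hsup z hz).1, hconst z hz⟩
      exact ⟨hmem, classOf_eq hmem⟩
  have hsplit : arbOn G γ A T ≤ 2 * K := by
    have h0 := hpar 0
    have h1 := hpar 1
    have hsub : T ⊆ {v | v ∈ T ∧ dIn G T r v % 2 = 0} ∪ {v | v ∈ T ∧ dIn G T r v % 2 = 1} := by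
      intro v hv
      rcases Nat.mod_two_eq_zero_or_one (dIn G T r v) with h | h
      · exact Or.inl ⟨hv, h⟩
      · exact Or.inr ⟨hv, h⟩
    have := arbOn_le_add (G := G) (γ := γ) (A := A) hsub
    omega
  have hSsub : S ⊆ T := classOf_subset
  have hSconn : ConnIn G S := connIn_classOf hx₀T
  by_cases hsing : ∃ v, S = {v}
  · exact ⟨S, hSsub, hSconn, hsplit, Or.inl hsing⟩
  have hSlev : S ⊆ LevSet G T r j := classOf_subset_lev
  have hj1 : 1 ≤ j := by
    by_contra hj0
    push_neg at hj0
    have hj0' : j = 0 := by omega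
    apply hsing
    refine ⟨r, Set.Subset.antisymm ?_ ?_⟩
    · intro v hv
      have hlev := hSlev hv
      exact eq_of_dIn_zero (hT.2 r hr v hlev.1) (hlev.2.trans hj0')
    · intro z hz
      rw [Set.mem_singleton_iff] at hz
      rw [hz]
      have hx₀S : x₀ ∈ S := mem_classOf_self hx₀T
      have hxr : x₀ = r := eq_of_dIn_zero (hT.2 r hr x₀ hx₀T) ((hSlev hx₀S).2.trans hj0')
      rwa [← hxr]
  refine ⟨S, hSsub, hSconn, hsplit, Or.inr ⟨base_path hT hr hj1 hSlev, ?_⟩⟩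
  intro x hx
  have hxlev := hSlev hx
  obtain ⟨u, huT, hadj, hdu, -⟩ :=
    exists_parent (hT.2 r hr x hxlev.1) (k := j - 1) (by rw [hxlev.2]; omega)
  refine ⟨u, huT, hadj, fun huS => ?_⟩
  have := (hSlev huS).2
  omega

lemma step_lemma [Fintype V] {T₀ T : Set V} {c : ℕ} (hTT : T ⊆ T₀) (hT : ConnIn G T)
    (hP : PathProp G T₀ T c) :
    ∃ S : Set V, S ⊆ T ∧ ConnIn G S ∧ arbOn G γ A T ≤ 2 * arbOn G γ A S ∧
      ((∃ v, S = {v}) ∨ PathProp G T₀ S (c + 1)) := by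
  obtain ⟨S, hSsub, hSconn, harb, hdisj⟩ := core (G := G) (γ := γ) (A := A) hT
  refine ⟨S, hSsub, hSconn, harb, ?_⟩
  rcases hdisj with h | ⟨-, hbdry⟩
  · exact Or.inl h
  right
  intro x hx y hy hxy
  obtain ⟨u, huT, hadj, huS⟩ := hbdry x hx
  have hxT := hSsub hx
  have hyT := hSsub hy
  have huy : u ≠ y := fun h => huS (h ▸ hy)
  obtain ⟨q, hqpath, hq2, hqc, hqT0, hqint⟩ := hP u huT y hyT huy
  have hxq : x ∉ q.support := by
    intro hxs
    by_cases h1 : x = u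
    · exact huS (h1 ▸ hx)
    · by_cases h2 : x = y
      · exact hxy h2
      · exact (hqint x hxs h1 h2) hxT
  refine ⟨SimpleGraph.Walk.cons hadj q, hqpath.cons hxq, ?_, ?_, ?_, ?_⟩
  · rw [SimpleGraph.Walk.length_cons]; omega
  · rw [SimpleGraph.Walk.length_cons]; omega
  · intro v hv
    rw [SimpleGraph.Walk.support_cons, List.mem_cons] at hv
    rcases hv with hv | hv
    · rw [hv]; exact hTT hxT
    · exact hqT0 v hv
  · intro v hv hvx hvy
    rw [SimpleGraph.Walk.support_cons, List.mem_cons] at hv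
    rcases hv with hv | hv
    · exact absurd hv hvx
    · by_cases hvu : v = u
      · rw [hvu]; exact huS
      · intro hvS
        exact (hqint v hv hvu hvy) (hSsub hvS)

lemma stage [Fintype V] {T : Set V} (hT : ConnIn G T) (s : ℕ) (hs : 1 ≤ s) :
    ∃ S : Set V, S ⊆ T ∧ ConnIn G S ∧ arbOn G γ A T ≤ 2 ^ s * arbOn G γ A S ∧
      ((∃ v, S = {v}) ∨ PathProp G T S (s + 1)) := by
  induction s with
  | zero => omega
  | succ n ih =>
    rcases Nat.eq_zero_or_pos n with h0 | hn
    · subst h0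
      obtain ⟨S, h1, h2, h3, h4⟩ := core (G := G) (γ := γ) (A := A) hT
      refine ⟨S, h1, h2, by simpa using h3, ?_⟩
      rcases h4 with h4 | ⟨hp, -⟩
      · exact Or.inl h4
      · exact Or.inr hp
    · obtain ⟨U, hU1, hU2, hU3, hU4⟩ := ih hn
      rcases hU4 with hsing | hpath
      · refine ⟨U, hU1, hU2, ?_, Or.inl hsing⟩
        refine hU3.trans ?_
        have : (2:ℕ) ^ n ≤ 2 ^ (n + 1) := Nat.pow_le_pow_right (by omega) (by omega)
        exact Nat.mul_le_mul_right _ this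
      · obtain ⟨S, h1, h2, h3, h4⟩ := step_lemma (γ := γ) (A := A) hU1 hU2 hpath
        refine ⟨S, h1.trans hU1, h2, ?_, ?_⟩
        · calc arbOn G γ A T ≤ 2 ^ n * arbOn G γ A U := hU3
            _ ≤ 2 ^ n * (2 * arbOn G γ A S) := Nat.mul_le_mul_left _ h3
            _ = 2 ^ (n + 1) * arbOn G γ A S := by ring
        · rcases h4 with h4 | h4
          · exact Or.inl h4
          · exact Or.inr h4

end Dev

theorem statement10 (ℓ m : ℕ) (hℓ : 0 < ℓ) (hm : 0 < m)
    (Γ : Type v) [AddCommGroup Γ] (A : Set Γ) (hA : A.Nonempty)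
    (V : Type u) [Fintype V] (G : SimpleGraph V) (γ : Sym2 V → Γ)
    (hG : G.Connected) (harb : 2 ^ (ℓ * m) ≤ arb G γ A) :
    ∃ S : ℕ → Set V, S 0 = Set.univ ∧
      (∀ i, 1 ≤ i → i ≤ m → S i ⊆ S (i - 1)) ∧
      (∀ i, 1 ≤ i → i ≤ m → ∀ x ∈ S m, ∀ y ∈ S m, x ≠ y →
        ∃ w : G.Walk x y,
          IsXPathIn G (S m) (S m ∪ (S (i - 1) \ S i)) w ∧ ℓ ≤ w.length) ∧
      (∀ i, 1 ≤ i → i ≤ m → (G.induce (S i)).Connected ∧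
        (arb G γ A : ℝ) / 2 ^ (i * ℓ) ≤ (arbOn G γ A (S i) : ℝ)) := by
  classical
  have hconnU : ConnIn G (Set.univ : Set V) := by
    refine ⟨⟨hG.nonempty.some, trivial⟩, fun x _ y _ => ?_⟩
    obtain ⟨w⟩ := hG.preconnected x y
    exact ⟨w, fun v _ => trivial⟩
  let stp : {T : Set V // ConnIn G T} → {T : Set V // ConnIn G T} := fun p =>
    ⟨(stage (G := G) (γ := γ) (A := A) p.2 ℓ hℓ).choose,
      (stage (G := G) (γ := γ) (A := A) p.2 ℓ hℓ).choose_spec.2.1⟩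
  let g : ℕ → {T : Set V // ConnIn G T} := fun n =>
    Nat.rec ⟨Set.univ, hconnU⟩ (fun _ p => stp p) n
  have hg0 : (g 0).1 = Set.univ := rfl
  have hgs : ∀ n, g (n + 1) = stp (g n) := fun n => rfl
  have hspec : ∀ n, (g (n + 1)).1 ⊆ (g n).1 ∧ ConnIn G (g (n + 1)).1 ∧
      arbOn G γ A (g n).1 ≤ 2 ^ ℓ * arbOn G γ A (g (n + 1)).1 ∧
      ((∃ v, (g (n + 1)).1 = {v}) ∨ PathProp G (g n).1 (g (n + 1)).1 (ℓ + 1)) := by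
    intro n
    exact (stage (G := G) (γ := γ) (A := A) (g n).2 ℓ hℓ).choose_spec
  have hmono : ∀ a b : ℕ, a ≤ b → (g b).1 ⊆ (g a).1 := by
    intro a b hab
    induction b with
    | zero => rw [Nat.le_zero.mp hab]
    | succ n ih =>
      rcases Nat.lt_or_ge a (n + 1) with h | h
      · exact ((hspec n).1).trans (ih (by omega))
      · have : a = n + 1 := by omega
        rw [this]
  have hchain : ∀ n : ℕ, arbOn G γ A Set.univ ≤ 2 ^ (n * ℓ) * arbOn G γ A (g n).1 := by
    intro n
    induction n with
    | zero =>
      have hgu : (g 0).1 = Set.univ := rfl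
      rw [hgu]
      simp
    | succ n ih =>
      calc arbOn G γ A Set.univ ≤ 2 ^ (n * ℓ) * arbOn G γ A (g n).1 := ih
        _ ≤ 2 ^ (n * ℓ) * (2 ^ ℓ * arbOn G γ A (g (n + 1)).1) :=
            Nat.mul_le_mul_left _ (hspec n).2.2.1
        _ = 2 ^ ((n + 1) * ℓ) * arbOn G γ A (g (n + 1)).1 := by
            rw [add_mul, one_mul, pow_add]; ring
  refine ⟨fun i => (g i).1, rfl, ?_, ?_, ?_⟩
  · intro i hi him
    obtain ⟨k, rfl⟩ := Nat.exists_eq_succ_of_ne_zero (by omega : i ≠ 0)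
    have : k + 1 - 1 = k := by omega
    rw [this]
    exact (hspec k).1
  · intro i hi him x hx y hy hxy
    obtain ⟨k, rfl⟩ := Nat.exists_eq_succ_of_ne_zero (by omega : i ≠ 0)
    have hk1 : k + 1 - 1 = k := by omega
    rw [hk1]
    have hxS : x ∈ (g (k + 1)).1 := hmono (k + 1) m him hx
    have hyS : y ∈ (g (k + 1)).1 := hmono (k + 1) m him hy
    rcases (hspec k).2.2.2 with ⟨v, hv⟩ | hpath
    · exfalso
      rw [hv] at hxS hyS
      rw [Set.mem_singleton_iff] at hxS hyS
      exact hxy (hxS.trans hyS.symm)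
    · obtain ⟨w, hwpath, hw2, hwc, hwT, hwint⟩ := hpath x hxS y hyS hxy
      refine ⟨w, ⟨hwpath, hw2, hx, hy, ?_, ?_⟩, by omega⟩
      · intro u hu
        by_cases hux : u = x
        · rw [hux]; exact Or.inl hx
        by_cases huy : u = y
        · rw [huy]; exact Or.inl hy
        · exact Or.inr ⟨hwT u hu, hwint u hu hux huy⟩
      · intro u hu hux huy huSm
        exact (hwint u hu hux huy) (hmono (k + 1) m him huSm)
  · intro i hi him
    refine ⟨(g i).2.induce_connected, ?_⟩
    have h := hchain i
    have h2 : (0:ℝ) < 2 ^ (i * ℓ) := by positivity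
    rw [div_le_iff₀ h2]
    have : (arb G γ A : ℝ) = (arbOn G γ A Set.univ : ℝ) := rfl
    rw [this]
    calc (arbOn G γ A Set.univ : ℝ) ≤ ((2 ^ (i * ℓ) * arbOn G γ A (g i).1 : ℕ) : ℝ) := by
          exact_mod_cast h
      _ = (arbOn G γ A (g i).1 : ℝ) * 2 ^ (i * ℓ) := by push_cast; ring

end ArbPaper
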